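/- Fix M ≥ 2 and α > 1, and let w be the Prelec weighting function with calibrated parameter β = (log M)^{1−α}. Then w underweights probabilities below the uniform value and overweights those above it: w(q) < q for all q ∈ (0, 1/M), and w(q) > q for all q ∈ (1/M, 1). -/

import Mathlib

/-- Prelec weighting function with parameters `α, β`: `w(q) = exp(-β(-log q)^α)` for
`q ∈ (0,1]`, extended by `w(0) = 0`. -/
noncomputable def prelec (α β q : ℝ) : ℝ :=
  if q = 0 then 0 else Real.exp (-β * (-Real.log q) ^ α)

/-!
Write `t = -log q` and `L = log M`. Since `q = exp (-t)`, comparing `w(q)` with `q` amounts to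
comparing `β t^α` with `t`, and with `β = L^(1-α)` one has `β t^α = t (t / L)^(α-1)`. As
`α - 1 > 0`, the factor `(t / L)^(α-1)` exceeds `1` exactly when `t > L`, i.e. when `q < 1/M`.
-/

open Real

theorem prelec_lt_self_iff {α β q : ℝ} (hq : 0 < q) :
    prelec α β q < q ↔ -log q < β * (-log q) ^ α := by
  rw [prelec, if_neg hq.ne']
  nth_rw 2 [← exp_log hq]
  rw [exp_lt_exp]
  constructor <;> intro h <;> linarith

theorem self_lt_prelec_iff {α β q : ℝ} (hq : 0 < q) :
    q < prelec α β q ↔ β * (-log q) ^ α < -log q := by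
  rw [prelec, if_neg hq.ne']
  nth_rw 1 [← exp_log hq]
  rw [exp_lt_exp]
  constructor <;> intro h <;> linarith

theorem rpow_one_sub_mul_rpow_eq {α L t : ℝ} (hL : 0 < L) (ht : 0 < t) :
    L ^ (1 - α) * t ^ α = t * (t / L) ^ (α - 1) := by
  rw [div_rpow ht.le hL.le, show 1 - α = -(α - 1) by ring, rpow_neg hL.le,
    rpow_sub ht, rpow_one]
  field_simp

theorem lt_rpow_one_sub_mul_rpow_iff {α L t : ℝ} (hL : 0 < L) (ht : 0 < t) (hα : 1 < α) :
    t < L ^ (1 - α) * t ^ α ↔ L < t := by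
  rw [rpow_one_sub_mul_rpow_eq hL ht, lt_mul_iff_one_lt_right ht,
    ← one_lt_div hL, ← rpow_lt_rpow_iff zero_le_one (div_pos ht hL).le (sub_pos.2 hα), one_rpow]

theorem rpow_one_sub_mul_rpow_lt_iff {α L t : ℝ} (hL : 0 < L) (ht : 0 < t) (hα : 1 < α) :
    L ^ (1 - α) * t ^ α < t ↔ t < L := by
  rw [rpow_one_sub_mul_rpow_eq hL ht, mul_lt_iff_lt_one_right ht,
    rpow_lt_one_iff' (div_pos ht hL).le (sub_pos.2 hα), div_lt_one hL]

/-- For `M ≥ 2` and `α > 1`, the Prelec weighting function with calibrated parameter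
`β = (log M)^(1-α)` underweights probabilities below `1/M` and overweights those
above it. -/
theorem prelec_underweight_below_uniform (M : ℕ) (hM : 2 ≤ M) (α : ℝ)
    (hα : 1 < α) :
    (∀ q : ℝ, 0 < q → q < 1 / (M : ℝ) →
      prelec α (Real.log (M : ℝ) ^ ((1 : ℝ) - α)) q < q) ∧
    (∀ q : ℝ, 1 / (M : ℝ) < q → q < 1 →
      prelec α (Real.log (M : ℝ) ^ ((1 : ℝ) - α)) q > q) := by
  have hM1 : (1 : ℝ) < M := by exact_mod_cast hM
  have hL : 0 < log M := log_pos hM1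
  have hlog_inv : log (1 / (M : ℝ)) = -log M := by rw [one_div, log_inv]
  constructor
  · intro q hq hqM
    have hq1 : q < 1 := hqM.trans ((div_lt_one (by linarith)).2 hM1)
    rw [prelec_lt_self_iff hq, lt_rpow_one_sub_mul_rpow_iff hL (neg_pos.2 (log_neg hq hq1)) hα]
    linarith [log_lt_log hq hqM]
  · intro q hqM hq1
    have hq : 0 < q := lt_trans (by positivity) hqM
    rw [gt_iff_lt, self_lt_prelec_iff hq,
      rpow_one_sub_mul_rpow_lt_iff hL (neg_pos.2 (log_neg hq hq1)) hα]
    linarith [log_lt_log (by positivity) hqM]
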